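/- In the closure construction, double negation is faithful: A ∈ L(U) if and only if ¬¬A ∈ L(U), provided the base L_0(U) satisfies this property (A ∈ L_0(U) iff ¬¬A ∈ L_0(U) whenever either lies in L_0(U)) and L_0(U) contains only formulas that are either base-true or handled by rule L_n^0. -/
import Mathlib


inductive PFrm : Type
  | atom : ℕ → PFrm
  | not : PFrm → PFrm
  | or : PFrm → PFrm → PFrm
  | and : PFrm → PFrm → PFrm
  | imp : PFrm → PFrm → PFrm
  | iff : PFrm → PFrm → PFrm

def rules (L : Set PFrm) : Set PFrm :=
  {C | (∃ A ∈ L, C = PFrm.not (PFrm.not A)) ∨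
       (∃ A B, C = PFrm.or A B ∧ ((A ∈ L ∧ B ∈ L) ∨ (A ∈ L ∧ PFrm.not B ∈ L) ∨ (PFrm.not A ∈ L ∧ B ∈ L))) ∨
       (∃ A B, C = PFrm.and A B ∧ A ∈ L ∧ B ∈ L) ∨
       (∃ A B, C = PFrm.imp A B ∧ ((PFrm.not A ∈ L ∧ B ∈ L) ∨ (PFrm.not A ∈ L ∧ PFrm.not B ∈ L) ∨ (A ∈ L ∧ B ∈ L))) ∨
       (∃ A B, C = PFrm.iff A B ∧ ((A ∈ L ∧ B ∈ L) ∨ (PFrm.not A ∈ L ∧ PFrm.not B ∈ L))) ∨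
       (∃ A B, C = PFrm.not (PFrm.or A B) ∧ PFrm.not A ∈ L ∧ PFrm.not B ∈ L) ∨
       (∃ A B, C = PFrm.not (PFrm.and A B) ∧ ((PFrm.not A ∈ L ∧ B ∈ L) ∨ (PFrm.not A ∈ L ∧ PFrm.not B ∈ L) ∨ (A ∈ L ∧ PFrm.not B ∈ L))) ∨
       (∃ A B, C = PFrm.not (PFrm.imp A B) ∧ A ∈ L ∧ PFrm.not B ∈ L) ∨
       (∃ A B, C = PFrm.not (PFrm.iff A B) ∧ ((A ∈ L ∧ PFrm.not B ∈ L) ∨ (PFrm.not A ∈ L ∧ B ∈ L)))}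

def Lev (B : Set PFrm) : ℕ → Set PFrm
  | 0 => B
  | n + 1 => Lev B n ∪ rules (Lev B n)

def limL (B : Set PFrm) : Set PFrm := ⋃ n, Lev B n

theorem stmt_14 (L0 : Set PFrm)
    (hbase : ∀ A : PFrm, PFrm.not (PFrm.not A) ∈ L0 → A ∈ L0) :
    ∀ A : PFrm, A ∈ limL L0 ↔ PFrm.not (PFrm.not A) ∈ limL L0 := by
  have key : ∀ n A, PFrm.not (PFrm.not A) ∈ Lev L0 n → A ∈ Lev L0 n := by
    intro n
    induction n with
    | zero => exact hbase
    | succ n ih =>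
      intro A hA
      rcases hA with h | h
      · exact Or.inl (ih A h)
      · rcases h with ⟨A', hA', hEq⟩ | ⟨A', B', hEq, _⟩ | ⟨A', B', hEq, _⟩ |
          ⟨A', B', hEq, _⟩ | ⟨A', B', hEq, _⟩ | ⟨A', B', hEq, _⟩ |
          ⟨A', B', hEq, _⟩ | ⟨A', B', hEq, _⟩ | ⟨A', B', hEq, _⟩ <;>
        first
        | (injection hEq with h1; injection h1 with h2; subst h2; exact Or.inl hA')
        | exact PFrm.noConfusion hEq
        | (injection hEq with h1; exact PFrm.noConfusion h1)
  intro A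
  constructor
  · rintro ⟨S, ⟨n, rfl⟩, hn⟩
    exact Set.mem_iUnion.2 ⟨n + 1, Or.inr (Or.inl ⟨A, hn, rfl⟩)⟩
  · rintro ⟨S, ⟨n, rfl⟩, hn⟩
    exact Set.mem_iUnion.2 ⟨n, key n A hn⟩
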